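/- With Σ₁ and Σ₂ the two 3-node Gaussian tree covariance matrices as above, the Chernoff information between N(0,Σ₁) and N(0,Σ₂) equals (1/2)·ln(1 + (1/2)·(w₂²/(1−w₂²))·(1−w₁)), which can be written as ln((λ_max + 1)/(2√λ_max)) where λ_max = (√β + w₂)/(√β − w₂), β = w₂² + 2(1−w₂²)/(1−w₁). -/

import Mathlib

/-!
Σ₁ is Σ₂ with the first two coordinates swapped. The swap therefore fixes the midpoint
precision `(Σ₁⁻¹ + Σ₂⁻¹)/2`, so `tr(Σ₁⁻¹ Σ_{1/2}) = tr(Σ₂⁻¹ Σ_{1/2})`; the two traces average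
to `tr(I) = 3`, and the trace term of the KL divergence cancels the constant `-3/2`.
What is left is `½ log(det Σ₂ · det Σ_{1/2}⁻¹)`, a determinant of explicit 3×3 matrices.
For the second closed form, with `s = √β` and `λ = (s + w₂)/(s - w₂)`,
`((λ + 1)/(2√λ))² = s²/(s² - w₂²)`.
-/

open Matrix

/-- KL divergence between zero-mean 3-dimensional Gaussians `N(0,S)`, `N(0,T)`. -/
noncomputable def gaussVecKL3 (S T : Matrix (Fin 3) (Fin 3) ℝ) : ℝ :=
  (1/2) * Real.log (T.det / S.det) + (1/2) * (T⁻¹ * S).trace - (3 : ℝ) / 2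

namespace Matrix

variable {n K : Type*} [Fintype n] [DecidableEq n] [Field K]

/-- `Σ_{1/2}⁻¹` in the notation of the Chernoff information. -/
noncomputable def midPrecision (S T : Matrix n n K) : Matrix n n K :=
  (1/2 : K) • S⁻¹ + (1/2 : K) • T⁻¹

omit [DecidableEq n] in
theorem trace_submatrix_perm (σ : Equiv.Perm n) (M : Matrix n n K) :
    (M.submatrix σ σ).trace = M.trace :=
  Equiv.sum_comp σ fun i => M i i

theorem trace_inv_mul_inv_midPrecision_submatrix [NeZero (2 : K)] {σ : Equiv.Perm n}
    (hσ : Function.Involutive σ) (S : Matrix n n K)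
    (hA : IsUnit (midPrecision (S.submatrix σ σ) S).det) :
    (S⁻¹ * (midPrecision (S.submatrix σ σ) S)⁻¹).trace = Fintype.card n := by
  set A := midPrecision (S.submatrix σ σ) S
  have hA_invariant : A.submatrix σ σ = A := by
    ext i j
    simp [A, midPrecision, inv_submatrix_equiv, hσ i, hσ j, add_comm]
  have hAinv_invariant : A⁻¹.submatrix σ σ = A⁻¹ := by
    rw [← inv_submatrix_equiv, hA_invariant]
  have hswap : ((S.submatrix σ σ)⁻¹ * A⁻¹).trace = (S⁻¹ * A⁻¹).trace := by
    rw [inv_submatrix_equiv, ← hAinv_invariant, submatrix_mul_equiv, trace_submatrix_perm,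
      hAinv_invariant]
  have hsum : (1/2 : K) * ((S.submatrix σ σ)⁻¹ * A⁻¹).trace + (1/2 : K) * (S⁻¹ * A⁻¹).trace
      = Fintype.card n := by
    rw [← trace_one, ← mul_nonsing_inv A hA]
    simp only [A, midPrecision, add_mul, smul_mul_assoc, trace_add, trace_smul, smul_eq_mul]
  rwa [hswap, ← add_mul, add_halves, one_mul] at hsum

end Matrix

theorem gaussVecKL3_inv_midPrecision_submatrix {σ : Equiv.Perm (Fin 3)}
    (hσ : Function.Involutive σ) (S : Matrix (Fin 3) (Fin 3) ℝ)
    (hA : IsUnit (midPrecision (S.submatrix σ σ) S).det) :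
    gaussVecKL3 (midPrecision (S.submatrix σ σ) S)⁻¹ S
      = 1/2 * Real.log (S.det * (midPrecision (S.submatrix σ σ) S).det) := by
  rw [gaussVecKL3, trace_inv_mul_inv_midPrecision_submatrix hσ S hA, det_nonsing_inv,
    Ring.inverse_eq_inv', div_inv_eq_mul]
  norm_num

/-- The covariance of the Gaussian tree `1 — 0 — 2` with edge correlations `a` and `b`;
`Σ₂ = treeCov w₁ w₂`. -/
def treeCov (a b : ℝ) : Matrix (Fin 3) (Fin 3) ℝ := !![1, a, b; a, 1, a * b; b, a * b, 1]

theorem treeCov_det (a b : ℝ) : (treeCov a b).det = (1 - a ^ 2) * (1 - b ^ 2) := by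
  rw [treeCov, det_fin_three]
  simp only [of_apply, cons_val', cons_val_zero, cons_val_fin_one, cons_val_one, cons_val,
    mul_one, one_mul]
  ring

theorem treeCov_inv {a b : ℝ} (ha : 1 - a ^ 2 ≠ 0) (hb : 1 - b ^ 2 ≠ 0) :
    (treeCov a b)⁻¹ =
      !![1 / (1 - a ^ 2) + 1 / (1 - b ^ 2) - 1, -a / (1 - a ^ 2), -b / (1 - b ^ 2);
        -a / (1 - a ^ 2), 1 / (1 - a ^ 2), 0;
        -b / (1 - b ^ 2), 0, 1 / (1 - b ^ 2)] := by
  refine inv_eq_right_inv ?_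
  ext i j
  fin_cases i <;> fin_cases j <;>
    simp [treeCov, mul_apply, Fin.sum_univ_three, one_apply] <;> field_simp <;> ring

theorem det_midPrecision_treeCov {a b : ℝ} (ha : 1 - a ^ 2 ≠ 0) (hb : 1 - b ^ 2 ≠ 0) :
    (midPrecision ((treeCov a b).submatrix (Equiv.swap 0 1) (Equiv.swap 0 1)) (treeCov a b)).det
      = (2 * (1 - b ^ 2) + (1 - a) * b ^ 2) / (2 * (1 - a ^ 2) * (1 - b ^ 2) ^ 2) := by
  rw [midPrecision, inv_submatrix_equiv, treeCov_inv ha hb, det_fin_three]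
  simp only [one_div, smul_of, smul_cons, smul_eq_mul, smul_empty, mul_zero, Matrix.add_apply,
    Matrix.smul_apply, submatrix_apply, Equiv.swap_apply_left, Equiv.swap_apply_right,
    Equiv.swap_apply_def, of_apply, cons_val', cons_val_one, cons_val_zero, cons_val_fin_one,
    cons_val, Fin.reduceEq, ↓reduceIte, add_zero, zero_add]
  field_simp
  ring

theorem log_ratio_add_one_div_two_sqrt {s w : ℝ} (h : |w| < s) :
    Real.log (((s + w) / (s - w) + 1) / (2 * √((s + w) / (s - w))))
      = 1/2 * Real.log (s ^ 2 / (s ^ 2 - w ^ 2)) := by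
  obtain ⟨hl, hr⟩ := abs_lt.mp h
  have hsub : 0 < s - w := by linarith
  have hadd : 0 < s + w := by linarith
  have hratio : 0 < (s + w) / (s - w) := by positivity
  have hsq : (((s + w) / (s - w) + 1) / (2 * √((s + w) / (s - w)))) ^ 2
      = s ^ 2 / (s ^ 2 - w ^ 2) := by
    rw [div_pow, mul_pow, Real.sq_sqrt hratio.le, show s ^ 2 - w ^ 2 = (s - w) * (s + w) by ring]
    field_simp
    ring
  rw [← hsq, Real.log_pow]
  push_cast
  ring

theorem stmt_12_general (w1 w2 : ℝ) (hw1 : |w1| < 1) (hw2' : |w2| < 1) :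
    let S1 : Matrix (Fin 3) (Fin 3) ℝ := !![(1:ℝ), w1, w1*w2; w1, 1, w2; w1*w2, w2, 1]
    let S2 : Matrix (Fin 3) (Fin 3) ℝ := !![(1:ℝ), w1, w2; w1, 1, w1*w2; w2, w1*w2, 1]
    let Smid : Matrix (Fin 3) (Fin 3) ℝ := ((1/2 : ℝ) • S1⁻¹ + (1/2 : ℝ) • S2⁻¹)⁻¹
    let lmax : ℝ := (Real.sqrt (w2^2 + 2*(1 - w2^2)/(1 - w1)) + w2) /
                      (Real.sqrt (w2^2 + 2*(1 - w2^2)/(1 - w1)) - w2)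
    gaussVecKL3 Smid S2 = (1/2) * Real.log (1 + (1/2) * (w2^2/(1 - w2^2)) * (1 - w1)) ∧
    gaussVecKL3 Smid S2 = Real.log ((lmax + 1) / (2 * Real.sqrt lmax)) := by
  intro S1 S2 Smid lmax
  obtain ⟨hw1l, hw1r⟩ := abs_lt.mp hw1
  have ha : 0 < 1 - w1 ^ 2 := by nlinarith
  have hb : 0 < 1 - w2 ^ 2 := by nlinarith [abs_lt.mp hw2']
  have hw1' : 0 < 1 - w1 := by linarith
  have hS1 : S1 = (treeCov w1 w2).submatrix (Equiv.swap 0 1) (Equiv.swap 0 1) := by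
    ext i j; fin_cases i <;> fin_cases j <;> rfl
  have hS2 : S2 = treeCov w1 w2 := rfl
  have hdet : S2.det * (midPrecision S1 S2).det
      = 1 + (1/2) * (w2^2/(1 - w2^2)) * (1 - w1) := by
    rw [hS1, hS2, treeCov_det, det_midPrecision_treeCov ha.ne' hb.ne']
    field_simp
  have hpos : 0 < 1 + (1/2) * (w2^2/(1 - w2^2)) * (1 - w1) := by positivity
  have hunit : IsUnit (midPrecision S1 S2).det := (right_ne_zero_of_mul (hdet ▸ hpos.ne')).isUnit
  have hKL : gaussVecKL3 Smid S2
      = (1/2) * Real.log (1 + (1/2) * (w2^2/(1 - w2^2)) * (1 - w1)) := by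
    rw [hS1] at hunit
    have h := gaussVecKL3_inv_midPrecision_submatrix (Equiv.swap_apply_self 0 1) _ hunit
    rwa [← hS1, ← hS2, hdet] at h
  refine ⟨hKL, hKL.trans ?_⟩
  have hβ : w2 ^ 2 < w2^2 + 2*(1 - w2^2)/(1 - w1) := by simp only [lt_add_iff_pos_right]; positivity
  have hs : |w2| < √(w2^2 + 2*(1 - w2^2)/(1 - w1)) :=
    (Real.lt_sqrt (abs_nonneg _)).mpr (by rwa [sq_abs])
  rw [log_ratio_add_one_div_two_sqrt hs, Real.sq_sqrt (by positivity)]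
  congr 2
  field_simp
  ring

/-- The full-observation Chernoff information between the two 3-node Gaussian
trees equals `(1/2)ln(1 + (1/2)(w₂²/(1-w₂²))(1-w₁)) = ln((λ_max+1)/(2√λ_max))`.
Here `λ* = 1/2` (equal determinants), so
`CI(Σ₁‖Σ₂) = D(Σ_{1/2}‖Σ₂)` with `Σ_{1/2}⁻¹ = (Σ₁⁻¹ + Σ₂⁻¹)/2`. -/
theorem stmt_12 (w1 w2 : ℝ) (hw1 : |w1| < 1) (hw2 : 0 < |w2|) (hw2' : |w2| < 1) :
    let S1 : Matrix (Fin 3) (Fin 3) ℝ := !![(1:ℝ), w1, w1*w2; w1, 1, w2; w1*w2, w2, 1]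
    let S2 : Matrix (Fin 3) (Fin 3) ℝ := !![(1:ℝ), w1, w2; w1, 1, w1*w2; w2, w1*w2, 1]
    let Smid : Matrix (Fin 3) (Fin 3) ℝ := ((1/2 : ℝ) • S1⁻¹ + (1/2 : ℝ) • S2⁻¹)⁻¹
    let lmax : ℝ := (Real.sqrt (w2^2 + 2*(1 - w2^2)/(1 - w1)) + w2) /
                      (Real.sqrt (w2^2 + 2*(1 - w2^2)/(1 - w1)) - w2)
    gaussVecKL3 Smid S2 = (1/2) * Real.log (1 + (1/2) * (w2^2/(1 - w2^2)) * (1 - w1)) ∧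
    gaussVecKL3 Smid S2 = Real.log ((lmax + 1) / (2 * Real.sqrt lmax)) :=
  stmt_12_general w1 w2 hw1 hw2'
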